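/- arXiv:1603.03361 — 6 statements merged into one kernel-verified Lean document; each statement's English description precedes it below -/
import Mathlib

section
/- Let κ be an infinite cardinal and X ⊆ [ℕ]^∞ a set with |X| ≥ κ. The set X is κ-unbounded (every ≤-bounded subset of X has cardinality < κ) if and only if the set X ∪ Fin is κ-concentrated on Fin, i.e., |(X ∪ Fin) \ U| < κ for every open set U ⊆ 𝒫(ℕ) containing Fin. -/
open Set Cardinal Filter

/-- The increasing enumeration of a set of naturals (meaningful when the set is infinite). -/
noncomputable def enum (a : Set ℕ) : ℕ → ℕ := Nat.nth (· ∈ a)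

/-- `a ⊎ b = {2k : k ∈ a} ∪ {2k+1 : k ∈ b}`. -/
def usum (a b : Set ℕ) : Set ℕ := (fun k => 2 * k) '' a ∪ (fun k => 2 * k + 1) '' b

/-- The point of the Cantor space `2 ^ ℕ` corresponding to a set of naturals. -/
noncomputable def toCantor (a : Set ℕ) : ℕ → Bool := by
  classical exact fun n => if n ∈ a then true else false

/-! An open `U ⊇ Fin` contains, around each finite `s`, a cylinder of some length `k s`. Choosing
`m` with `m (n + 1) ≥ k s` for every `s ⊆ [0, m n)`, any set outside `U` meets every interval
`[m n, m (n + 1))` (otherwise it agrees with its finite part below `m (n + 1)`), so its enumeration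
is bounded by `n ↦ m (n + 1)`. Conversely, a bound `g` yields the open set of those `x` which, for
some `n`, have at most `n` elements in `[0, g n]`: it contains `Fin` but no infinite `y ≤ g`. -/

open PiNat

theorem PiNat.exists_cylinder_subset {E : ℕ → Type*} [∀ n, TopologicalSpace (E n)]
    [∀ n, DiscreteTopology (E n)] {U : Set (∀ n, E n)} (hU : IsOpen U) {x : ∀ n, E n}
    (hx : x ∈ U) : ∃ n, cylinder x n ⊆ U := by
  obtain ⟨_, ⟨y, n, rfl⟩, hxy, hsub⟩ :=
    (isTopologicalBasis_cylinders E).exists_subset_of_mem_open hx hU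
  exact ⟨n, mem_cylinder_iff_eq.1 hxy ▸ hsub⟩

theorem Nat.lt_count_of_forall_exists_mem_Ico {p : ℕ → Prop} [DecidablePred p] {m : ℕ → ℕ}
    (h : ∀ n, ∃ j ∈ Ico (m n) (m (n + 1)), p j) (n : ℕ) : n < Nat.count p (m (n + 1)) := by
  have hstep : ∀ n, Nat.count p (m n) < Nat.count p (m (n + 1)) := fun n => by
    obtain ⟨j, ⟨hmj, hjm⟩, hj⟩ := h n
    exact (Nat.count_monotone p hmj).trans_lt (Nat.count_strict_mono hj hjm)
  induction n with
  | zero => exact (Nat.zero_le _).trans_lt (hstep 0)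
  | succ n ih => exact (Nat.succ_le_of_lt ih).trans_lt (hstep (n + 1))

theorem le_enum_range {f : ℕ → ℕ} (hf : StrictMono f) (n : ℕ) : f n ≤ enum (range f) n := by
  have hfin : ∀ n, ∀ h : (Set.ofPred (· ∈ range f)).Finite, n < h.toFinset.card :=
    fun _ h => absurd h (infinite_range_of_injective hf.injective)
  refine Nat.le_nth_of_monotoneOn_of_surjOn f (fun _ hx => ?_) (hf.monotone.monotoneOn _) (hfin n)
  obtain ⟨k, hk⟩ := hx
  exact ⟨k, hfin k, hk⟩

lemma toCantor_eq_true {a : Set ℕ} {i : ℕ} : toCantor a i = true ↔ i ∈ a := by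
  classical simp [toCantor]

lemma toCantor_eq_toCantor {a b : Set ℕ} {i : ℕ} :
    toCantor a i = toCantor b i ↔ (i ∈ a ↔ i ∈ b) := by
  rw [Bool.eq_iff_iff, toCantor_eq_true, toCantor_eq_true]

def finsetBoundSeq (k : Finset ℕ → ℕ) : ℕ → ℕ
  | 0 => 0
  | n + 1 => max (finsetBoundSeq k n + 1) ((Finset.range (finsetBoundSeq k n)).powerset.sup k)

theorem strictMono_finsetBoundSeq (k : Finset ℕ → ℕ) : StrictMono (finsetBoundSeq k) :=
  strictMono_nat_of_lt_succ fun _ => Nat.lt_of_succ_le (le_max_left _ _)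

theorem le_finsetBoundSeq_succ (k : Finset ℕ → ℕ) {n : ℕ} {s : Finset ℕ}
    (hs : s ⊆ Finset.range (finsetBoundSeq k n)) : k s ≤ finsetBoundSeq k (n + 1) :=
  (Finset.le_sup (Finset.mem_powerset.2 hs)).trans (le_max_right _ _)

theorem exists_mem_Ico_of_toCantor_notMem {U : Set (ℕ → Bool)} {k : Finset ℕ → ℕ}
    (hk : ∀ s : Finset ℕ, cylinder (toCantor s) (k s) ⊆ U) {a : Set ℕ} (ha : toCantor a ∉ U)
    (n : ℕ) : ∃ j ∈ Ico (finsetBoundSeq k n) (finsetBoundSeq k (n + 1)), j ∈ a := by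
  classical
  by_contra! h
  let s := (Finset.range (finsetBoundSeq k n)).filter (· ∈ a)
  refine ha (hk s (mem_cylinder_iff.2 fun i hi => toCantor_eq_toCantor.2 ?_))
  have hi' : i < finsetBoundSeq k (n + 1) :=
    hi.trans_le (le_finsetBoundSeq_succ k (Finset.filter_subset _ _))
  simp only [s, Finset.coe_filter, Finset.mem_range, mem_ofPred_eq]
  exact ⟨fun hia => ⟨lt_of_not_ge fun hle => h i ⟨hle, hi'⟩ hia, hia⟩, And.right⟩

theorem exists_enum_le_of_isOpen {U : Set (ℕ → Bool)} (hU : IsOpen U)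
    (hFin : ∀ s : Set ℕ, s.Finite → toCantor s ∈ U) :
    ∃ b : Set ℕ, b.Infinite ∧ ∀ a, toCantor a ∉ U → ∀ n, enum a n ≤ enum b n := by
  classical
  choose k hk using fun s : Finset ℕ => exists_cylinder_subset hU (hFin s s.finite_toSet)
  have hm : StrictMono fun n => finsetBoundSeq k (n + 1) :=
    (strictMono_finsetBoundSeq k).comp (strictMono_id.add_const 1)
  refine ⟨range fun n => finsetBoundSeq k (n + 1), infinite_range_of_injective hm.injective,
    fun a ha n => ?_⟩
  calc enum a n ≤ finsetBoundSeq k (n + 1) :=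
        (Nat.nth_lt_of_lt_count (Nat.lt_count_of_forall_exists_mem_Ico
          (exists_mem_Ico_of_toCantor_notMem hk ha) n)).le
    _ ≤ enum (range fun n => finsetBoundSeq k (n + 1)) n := le_enum_range hm n

theorem exists_isOpen_toCantor_notMem (g : ℕ → ℕ) :
    ∃ U : Set (ℕ → Bool), IsOpen U ∧ (∀ s : Set ℕ, s.Finite → toCantor s ∈ U) ∧
      ∀ y : Set ℕ, y.Infinite → (∀ n, enum y n ≤ g n) → toCantor y ∉ U := by
  refine ⟨⋃ (n) (s : Finset ℕ) (_ : s.card ≤ n), cylinder (toCantor s) (g n + 1),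
    isOpen_iUnion fun _ => isOpen_biUnion fun _ _ => isOpen_cylinder _ _ _,
    fun s hs => ?_, fun y hy hyg hyU => ?_⟩
  · refine mem_iUnion.2 ⟨hs.toFinset.card, mem_iUnion₂.2 ⟨hs.toFinset, le_rfl, ?_⟩⟩
    rw [hs.coe_toFinset]
    exact self_mem_cylinder _ _
  · obtain ⟨n, s, hsn, hys⟩ : ∃ n, ∃ s : Finset ℕ, s.card ≤ n ∧
        toCantor y ∈ cylinder (toCantor s) (g n + 1) := by simpa using hyU
    have hsub : (Finset.range (n + 1)).image (enum y) ⊆ s := by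
      simp only [Finset.image_subset_iff, Finset.mem_range, Nat.lt_succ_iff]
      intro i hi
      have hlt : enum y i < g n + 1 :=
        Nat.lt_succ_of_le ((Nat.nth_monotone hy hi).trans (hyg n))
      exact (toCantor_eq_toCantor.1 (mem_cylinder_iff.1 hys _ hlt)).1
        (Nat.nth_mem_of_infinite hy i)
    have hinj : (enum y).Injective := Nat.nth_injective hy
    have hcard := Finset.card_le_card hsub
    rw [Finset.card_image_of_injective _ hinj, Finset.card_range] at hcard
    omega

theorem stmt4_general (κ : Cardinal) (X : Set (Set ℕ)) (hX : ∀ x ∈ X, x.Infinite) :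
    (∀ Y ⊆ X, (∃ b : Set ℕ, b.Infinite ∧ ∀ y ∈ Y, ∀ n, enum y n ≤ enum b n) → #Y < κ) ↔
    (∀ U : Set (ℕ → Bool), IsOpen U → (∀ s : Set ℕ, s.Finite → toCantor s ∈ U) →
      #{a : Set ℕ | a ∈ X ∪ {s | s.Finite} ∧ toCantor a ∉ U} < κ) := by
  constructor
  · intro hbdd U hU hFin
    obtain ⟨b, hb, hle⟩ := exists_enum_le_of_isOpen hU hFin
    exact hbdd _ (fun a ha => ha.1.resolve_right fun hs => ha.2 (hFin a hs))
      ⟨b, hb, fun a ha => hle a ha.2⟩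
  · rintro hconc Y hYX ⟨b, -, hle⟩
    obtain ⟨U, hU, hFin, hout⟩ := exists_isOpen_toCantor_notMem (enum b)
    refine (mk_le_mk_of_subset fun y hy => ?_).trans_lt (hconc U hU hFin)
    exact ⟨Or.inl (hYX hy), hout y (hX y (hYX hy)) (hle y hy)⟩

theorem stmt4 (κ : Cardinal) (hκ : ℵ₀ ≤ κ) (X : Set (Set ℕ)) (hX : ∀ x ∈ X, x.Infinite)
    (hcard : κ ≤ #X) :
    (∀ Y ⊆ X, (∃ b : Set ℕ, b.Infinite ∧ ∀ y ∈ Y, ∀ n, enum y n ≤ enum b n) → #Y < κ) ↔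
    (∀ U : Set (ℕ → Bool), IsOpen U → (∀ s : Set ℕ, s.Finite → toCantor s ∈ U) →
      #{a : Set ℕ | a ∈ X ∪ {s | s.Finite} ∧ toCantor a ∉ U} < κ) :=
  stmt4_general κ X hX
end

section
/- There exists a 𝔡-unbounded subset of [ℕ]^∞, where 𝔡 is the dominating number: there is a set X ⊆ [ℕ]^∞ of cardinality 𝔡 such that every ≤-bounded subset of X has cardinality less than 𝔡. -/
open Set Cardinal Filter

/-- A dominating family of functions. -/
def IsDominating (D : Set (ℕ → ℕ)) : Prop :=
  ∀ a : ℕ → ℕ, ∃ d ∈ D, ∀ᶠ n in Filter.atTop, a n ≤ d n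

/-- The dominating number 𝔡. -/
noncomputable def dNum : Cardinal := sInf { c | ∃ D, IsDominating D ∧ c = #D }

/-!
Enumerate a dominating family `d` along the initial well-order of type `𝔡` and build, by
transfinite recursion, strictly increasing `F i ≥ d i` such that `F i` is not `≤*`-dominated by
any earlier `F j`: fewer than `𝔡` functions never form a dominating family. The ranges of the
`F i` form `X`. A subfamily of size `𝔡` is cofinal in the well-order; if it were bounded by `g`,
pick `γ` with `g + 1 ≤* F γ` and a member `F i` with `γ < i`: then `F i` exceeds `F γ`, hence `g`,
infinitely often.
-/

theorem isDominating_univ : IsDominating univ :=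
  fun a => ⟨a, mem_univ a, .of_forall fun _ => le_rfl⟩

theorem IsDominating.range_mono {ι : Type*} {d F : ι → ℕ → ℕ} (hd : IsDominating (range d))
    (hle : ∀ i, d i ≤ F i) : IsDominating (range F) := by
  intro a
  obtain ⟨_, ⟨i, rfl⟩, hi⟩ := hd a
  exact ⟨F i, mem_range_self i, hi.mono fun n hn => hn.trans (hle i n)⟩

theorem not_isDominating_of_finite {D : Set (ℕ → ℕ)} (hD : D.Finite) : ¬ IsDominating D := by
  intro hdom
  obtain ⟨d, hd, hev⟩ := hdom (hD.toFinset.sup id + 1)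
  obtain ⟨n, hn⟩ := hev.exists
  have hsup : d ≤ hD.toFinset.sup id := Finset.le_sup (f := id) (hD.mem_toFinset.2 hd)
  exact (hn.trans (hsup n)).not_gt (Nat.lt_succ_self _)

theorem nonempty_dominatingCards : { c | ∃ D, IsDominating D ∧ c = #D }.Nonempty :=
  ⟨_, univ, isDominating_univ, rfl⟩

theorem exists_isDominating_mk_eq_dNum : ∃ D, IsDominating D ∧ dNum = #D :=
  csInf_mem nonempty_dominatingCards

theorem dNum_le_mk {D : Set (ℕ → ℕ)} (hD : IsDominating D) : dNum ≤ #D :=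
  csInf_le' (s := { c | ∃ D, IsDominating D ∧ c = #D }) ⟨D, hD, rfl⟩

theorem aleph0_le_dNum : ℵ₀ ≤ dNum :=
  le_csInf nonempty_dominatingCards fun _ ⟨_, hD, hc⟩ =>
    hc ▸ not_lt.1 fun h => not_isDominating_of_finite (lt_aleph0_iff_set_finite.1 h) hD

theorem exists_forall_frequently_lt {κ : Type} (G : κ → ℕ → ℕ) (hG : #κ < dNum) :
    ∃ u : ℕ → ℕ, ∀ k, ∃ᶠ n in atTop, G k n < u n := by
  have hnot : ¬ IsDominating (range G) := fun hdom =>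
    (mk_range_le.trans_lt hG).not_ge (dNum_le_mk hdom)
  simpa only [IsDominating, not_forall, not_exists, not_and, forall_mem_range,
    not_eventually, not_le] using hnot

theorem exists_isDominating_range_toType :
    ∃ d : dNum.ord.ToType → ℕ → ℕ, IsDominating (range d) := by
  obtain ⟨D, hD, hcard⟩ := exists_isDominating_mk_eq_dNum
  obtain ⟨e⟩ : Nonempty (dNum.ord.ToType ≃ D) := Cardinal.eq.1 (by rw [mk_ord_toType, hcard])
  refine ⟨fun i => e i, fun a => ?_⟩
  obtain ⟨d, hd, hev⟩ := hD a
  exact ⟨d, ⟨e.symm ⟨d, hd⟩, by simp⟩, hev⟩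

theorem mk_Iio_lt_dNum (i : dNum.ord.ToType) : #(Iio i) < dNum := by
  simpa using mk_Iio_lt i

theorem mk_Iic_lt_dNum (i : dNum.ord.ToType) : #(Iic i) < dNum := by
  rw [← Iio_insert]
  exact mk_insert_le.trans_lt <| add_lt_of_lt aleph0_le_dNum (mk_Iio_lt_dNum i)
    (one_lt_aleph0.trans_le aleph0_le_dNum)

def strictMonoMajorant (h : ℕ → ℕ) (n : ℕ) : ℕ := n + ∑ m ∈ Finset.range (n + 1), h m

theorem le_strictMonoMajorant (h : ℕ → ℕ) : h ≤ strictMonoMajorant h := fun n =>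
  (Finset.single_le_sum (fun _ _ => Nat.zero_le _) (Finset.self_mem_range_succ n)).trans
    (Nat.le_add_left _ _)

theorem strictMono_strictMonoMajorant (h : ℕ → ℕ) : StrictMono (strictMonoMajorant h) :=
  strictMono_nat_of_lt_succ fun n => by
    unfold strictMonoMajorant
    rw [Finset.sum_range_succ _ (n + 1)]
    omega

theorem enum_range {f : ℕ → ℕ} (hf : StrictMono f) : enum (range f) = f := by
  have hinf : (range f).Infinite := infinite_range_of_injective hf.injective
  exact range_injOn_strictMono (Nat.nth_strictMono hinf) hf (Nat.range_nth_of_infinite hinf)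

theorem exists_strictMono_escaping_family {ι : Type} [LinearOrder ι] [WellFoundedLT ι]
    (hsmall : ∀ i : ι, #(Iio i) < dNum) (d : ι → ℕ → ℕ) :
    ∃ F : ι → ℕ → ℕ, (∀ i, StrictMono (F i)) ∧ (∀ i, d i ≤ F i) ∧
      ∀ j i, j < i → ∃ᶠ n in atTop, F j n < F i n := by
  have escape (i : ι) (G : ∀ j, j < i → ℕ → ℕ) :
      ∃ u : ℕ → ℕ, ∀ j (hj : j < i), ∃ᶠ n in atTop, G j hj n < u n := by
    obtain ⟨u, hu⟩ := exists_forall_frequently_lt (fun j : Iio i => G j j.2) (hsmall i)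
    exact ⟨u, fun j hj => hu ⟨j, hj⟩⟩
  choose u hu using escape
  let F : ι → ℕ → ℕ := WellFoundedLT.fix fun i G => strictMonoMajorant (d i + u i G)
  have hF (i : ι) : F i = strictMonoMajorant (d i + u i fun j _ => F j) :=
    WellFoundedLT.fix_eq _ i
  have hle (i : ι) : d i + u i (fun j _ => F j) ≤ F i :=
    hF i ▸ le_strictMonoMajorant _
  refine ⟨F, fun i => hF i ▸ strictMono_strictMonoMajorant _,
    fun i n => (Nat.le_add_right _ _).trans (hle i n), fun j i hji => ?_⟩
  exact (hu i _ j hji).mono fun n hn => hn.trans_le ((Nat.le_add_left _ _).trans (hle i n))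

theorem mk_lt_dNum_of_forall_le {ι : Type} [LinearOrder ι] {F : ι → ℕ → ℕ}
    (hesc : ∀ j i, j < i → ∃ᶠ n in atTop, F j n < F i n) (hdom : IsDominating (range F))
    (hsmall : ∀ i : ι, #(Iic i) < dNum) {g : ℕ → ℕ} {T : Set ι} (hT : ∀ i ∈ T, F i ≤ g) :
    #T < dNum := by
  obtain ⟨_, ⟨γ, rfl⟩, hγ⟩ := hdom (g + 1)
  have hTγ : T ⊆ Iic γ := fun i hi => not_lt.1 fun hγi =>
    ((hesc γ i hγi).and_eventually hγ).exists.elim fun n ⟨hlt, hge⟩ =>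
      (hlt.trans_le (hT i hi n)).not_ge (Nat.le_of_succ_le hge)
  exact (mk_le_mk_of_subset hTγ).trans_lt (hsmall γ)

theorem stmt5 : ∃ X : Set (Set ℕ), (∀ x ∈ X, x.Infinite) ∧ #X = dNum ∧
    ∀ Y ⊆ X, (∃ b : Set ℕ, b.Infinite ∧ ∀ y ∈ Y, ∀ n, enum y n ≤ enum b n) → #Y < dNum := by
  obtain ⟨d, hd⟩ := exists_isDominating_range_toType
  obtain ⟨F, hmono, hle, hesc⟩ := exists_strictMono_escaping_family mk_Iio_lt_dNum d
  have hdom : IsDominating (range F) := hd.range_mono hle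
  have henum (i : dNum.ord.ToType) : enum (range (F i)) = F i := enum_range (hmono i)
  set R : dNum.ord.ToType → Set ℕ := fun i => range (F i)
  refine ⟨range R, ?_, le_antisymm ?_ ?_, ?_⟩
  · rintro _ ⟨i, rfl⟩
    exact infinite_range_of_injective (hmono i).injective
  · exact mk_range_le.trans_eq (mk_ord_toType dNum)
  · calc dNum ≤ #(range F) := dNum_le_mk hdom
      _ = #(enum '' range R) := by rw [← range_comp]; simp only [R, Function.comp_def, henum]
      _ ≤ #(range R) := mk_image_le
  · rintro Y hYX ⟨b, -, hb⟩
    calc #Y = #(R '' (R ⁻¹' Y)) := by rw [image_preimage_eq_of_subset hYX]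
      _ ≤ #(R ⁻¹' Y) := mk_image_le
      _ < dNum := mk_lt_dNum_of_forall_le hesc hdom mk_Iic_lt_dNum
          fun i hi n => henum i ▸ hb _ hi n
end

section
/- Let X ⊆ [ℕ]^∞ be a family with |X| < min{𝔡, 𝔯}. Then there exists b ∈ [ℕ]^∞ with infinite complement such that for every x ∈ X, both x(n) ≤ b(n) for infinitely many n and x(n) ≤ bᶜ(n) for infinitely many n (where b and bᶜ := ℕ \ b are identified with their increasing enumerations). -/
open Set Cardinal Filter

/-- \`r\` reaps the family \`A\`. -/
def Reaps (r : Set ℕ) (A : Set (Set ℕ)) : Prop := ∀ a ∈ A, (a ∩ r).Infinite ∧ (a \ r).Infinite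

/-- The reaping number 𝔯. -/
noncomputable def rNum : Cardinal :=
  sInf { c | ∃ A : Set (Set ℕ), (∀ a ∈ A, a.Infinite) ∧
    (¬ ∃ r : Set ℕ, r.Infinite ∧ Reaps r A) ∧ c = #A }

/-!
Since `#X < 𝔡`, the enumerations of the sets in `X` are not dominated, and two rounds of
escaping turn this into a single interval partition `w 0 < w 1 < ⋯` such that every `x ∈ X`
satisfies `x (w i) < w (i + 1)` for infinitely many `i`. Since `#X < 𝔯`, one set `s` reaps all
these index sets, and `b` is the union of the intervals `[w i, w (i + 1))` with `i ∈ s`.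
If `x (w i) < w (i + 1)` and the interval `[w i, w (i + 1))` misses `b` (resp. `bᶜ`), then
the `w i`-th element of `b` (resp. `bᶜ`), being at least `w i`, is at least `w (i + 1)`,
hence above `x (w i)`.
-/

def partitionOf (g : ℕ → ℕ) : ℕ → ℕ
  | 0 => 0
  | k + 1 => g (partitionOf g k) + partitionOf g k + 1

lemma partitionOf_strictMono (g : ℕ → ℕ) : StrictMono (partitionOf g) :=
  strictMono_nat_of_lt_succ fun k => by simp only [partitionOf]; omega

lemma exists_partitionOf_le_lt (g : ℕ → ℕ) (n : ℕ) :
    ∃ k, partitionOf g k ≤ n ∧ n < partitionOf g (k + 1) := by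
  induction n with
  | zero => exact ⟨0, le_rfl, partitionOf_strictMono g Nat.zero_lt_one⟩
  | succ n ih =>
    obtain ⟨k, hk, hnk⟩ := ih
    by_cases h : n + 1 < partitionOf g (k + 1)
    · exact ⟨k, by omega, h⟩
    · have := partitionOf_strictMono g (k + 1).lt_add_one
      exact ⟨k + 1, by omega, by omega⟩

lemma apply_lt_partitionOf_add_two {g : ℕ → ℕ} (hg : Monotone g) {n k : ℕ}
    (hn : n < partitionOf g (k + 1)) : g n < partitionOf g (k + 2) := by
  have := hg hn.le
  simp only [partitionOf] at this ⊢
  omega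

/-- With `t = partitionOf g`, escaping `h` at `n ∈ [t k, t (k + 1))` gives
`h (t k) ≤ h n < g n < t (k + 2)`. -/
lemma infinite_setOf_apply_partitionOf_lt {g h : ℕ → ℕ} (hg : Monotone g) (hh : Monotone h)
    (hgh : {n | h n < g n}.Infinite) :
    {k | h (partitionOf g k) < partitionOf g (k + 2)}.Infinite := by
  refine infinite_of_forall_exists_gt fun N => ?_
  obtain ⟨n, hn, hNn⟩ := hgh.exists_gt (partitionOf g (N + 1))
  obtain ⟨k, hkn, hnk⟩ := exists_partitionOf_le_lt g n
  refine ⟨k, (hh hkn).trans_lt (hn.trans (apply_lt_partitionOf_add_two hg hnk)), ?_⟩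
  have := (partitionOf_strictMono g).lt_iff_lt.1 (hNn.trans hnk)
  omega

lemma exists_monotone_infinite_setOf_lt (𝓕 : Set (ℕ → ℕ)) (h𝓕 : #𝓕 < dNum) :
    ∃ g : ℕ → ℕ, Monotone g ∧ ∀ y ∈ 𝓕, {n | y n < g n}.Infinite := by
  have hnd : ¬ IsDominating 𝓕 := fun hD =>
    (show dNum ≤ #𝓕 from csInf_le' ⟨𝓕, hD, rfl⟩).not_gt h𝓕
  simp only [IsDominating, not_forall, not_exists, not_and, not_eventually, not_le] at hnd
  obtain ⟨a, ha⟩ := hnd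
  refine ⟨fun n => (Finset.range (n + 1)).sup a,
    fun i j hij => Finset.sup_mono (Finset.range_subset_range.2 (by omega)), fun y hy => ?_⟩
  refine (Nat.frequently_atTop_iff_infinite.1 (ha y hy)).mono fun n hn => ?_
  exact hn.trans_le (Finset.le_sup (f := a) (Finset.self_mem_range_succ n))

/-- The second escape: it moves the two-step windows `[t k, t (k + 2))` of
`infinite_setOf_apply_partitionOf_lt` inside single intervals of a coarser partition. -/
lemma exists_strictMono_infinite_setOf_lt (𝓕 : Set (ℕ → ℕ)) (h𝓕 : #𝓕 < dNum)
    (hmono : ∀ y ∈ 𝓕, Monotone y) :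
    ∃ w : ℕ → ℕ, StrictMono w ∧ ∀ y ∈ 𝓕, {i | y (w i) < w (i + 1)}.Infinite := by
  classical
  obtain ⟨g, hg, hg𝓕⟩ := exists_monotone_infinite_setOf_lt 𝓕 h𝓕
  set t := partitionOf g
  set C : (ℕ → ℕ) → Set ℕ := fun y => {k | y (t k) < t (k + 2)}
  have hC : ∀ y ∈ 𝓕, (C y).Infinite := fun y hy =>
    infinite_setOf_apply_partitionOf_lt hg (hmono y hy) (hg𝓕 y hy)
  -- `next y v - 1` is the second element of `C y` that is `≥ v`
  set next : (ℕ → ℕ) → ℕ → ℕ := fun y v =>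
    Nat.nth (· ∈ C y) (Nat.count (· ∈ C y) v + 1) + 1
  obtain ⟨G, hG, hG𝓕⟩ := exists_monotone_infinite_setOf_lt (next '' 𝓕)
    (mk_image_le.trans_lt h𝓕)
  set u := partitionOf G
  refine ⟨fun i => t (u i), (partitionOf_strictMono g).comp (partitionOf_strictMono G),
    fun y hy => ?_⟩
  have hnext : Monotone (next y) := fun v v' hvv' =>
    Nat.succ_le_succ (Nat.nth_monotone (hC y hy) (by gcongr))
  have hwin : {i | next y (u i) < u (i + 2)}.Infinite :=
    infinite_setOf_apply_partitionOf_lt hG hnext (hG𝓕 _ ⟨y, hy, rfl⟩)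
  have hmem : ∀ {c i}, c ∈ C y → u i ≤ c → c + 2 ≤ u (i + 1) → y (t (u i)) < t (u (i + 1)) :=
    fun hc hic hci => ((hmono y hy) ((partitionOf_strictMono g).monotone hic)).trans_lt
      (hc.trans_le ((partitionOf_strictMono g).monotone hci))
  refine infinite_of_forall_exists_gt fun N => ?_
  obtain ⟨i, hi, hNi⟩ := hwin.exists_gt N
  set c₀ := Nat.nth (· ∈ C y) (Nat.count (· ∈ C y) (u i))
  set c₁ := Nat.nth (· ∈ C y) (Nat.count (· ∈ C y) (u i) + 1)
  have hc₀ : u i ≤ c₀ := Nat.le_nth_count (hC y hy) _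
  have hc₀₁ : c₀ < c₁ := Nat.nth_strictMono (hC y hy) (Nat.lt_succ_self _)
  have hc₁ : c₁ + 2 ≤ u (i + 2) := hi
  by_cases h : c₀ + 2 ≤ u (i + 1)
  · exact ⟨i, hmem (Nat.nth_mem_of_infinite (hC y hy) _) hc₀ h, hNi⟩
  · exact ⟨i + 1, hmem (c := c₁) (Nat.nth_mem_of_infinite (hC y hy) _) (by omega) hc₁, by omega⟩

lemma exists_reaps_of_mk_lt_rNum (𝒜 : Set (Set ℕ)) (h𝒜 : #𝒜 < rNum)
    (hinf : ∀ a ∈ 𝒜, a.Infinite) : ∃ r : Set ℕ, r.Infinite ∧ rᶜ.Infinite ∧ Reaps r 𝒜 := by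
  rcases 𝒜.eq_empty_or_nonempty with rfl | ⟨a, ha⟩
  · refine ⟨range (2 * ·), infinite_range_of_injective fun m n h => by omega,
      (infinite_range_of_injective fun m n (h : 2 * m + 1 = 2 * n + 1) => by omega).mono ?_,
      fun _ h => h.elim⟩
    rintro _ ⟨n, rfl⟩ ⟨m, h⟩
    dsimp only at h
    omega
  · by_contra! hno
    refine (show rNum ≤ #𝒜 from csInf_le' ⟨𝒜, hinf, fun ⟨r, hr, hreap⟩ => ?_, rfl⟩).not_gt h𝒜
    exact hno r hr ((hreap a ha).2.mono fun n hn => hn.2) hreap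

lemma le_enum_of_disjoint_Ico {S : Set ℕ} (hS : S.Infinite) {m M : ℕ}
    (hdisj : Disjoint S (Ico m M)) : M ≤ enum S m := by
  by_contra! h
  exact hdisj.ne_of_mem (Nat.nth_mem_of_infinite hS m)
    ⟨(Nat.nth_strictMono hS).le_apply, h⟩ rfl

lemma infinite_setOf_le_enum {S : Set ℕ} (hS : S.Infinite) {w y : ℕ → ℕ} (hw : StrictMono w)
    (h : {i | y (w i) < w (i + 1) ∧ Disjoint S (Ico (w i) (w (i + 1)))}.Infinite) :
    {n | y n ≤ enum S n}.Infinite := by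
  refine infinite_of_forall_exists_gt fun N => ?_
  obtain ⟨i, ⟨hy, hdisj⟩, hNi⟩ := h.exists_gt N
  exact ⟨w i, hy.le.trans (le_enum_of_disjoint_Ico hS hdisj), hNi.trans_le hw.le_apply⟩

def blocks (w : ℕ → ℕ) (s : Set ℕ) : Set ℕ := ⋃ i ∈ s, Ico (w i) (w (i + 1))

section blocks

variable {w : ℕ → ℕ} {s : Set ℕ} {i : ℕ}

lemma Ico_subset_blocks (hi : i ∈ s) : Ico (w i) (w (i + 1)) ⊆ blocks w s :=
  subset_biUnion_of_mem (u := fun i => Ico (w i) (w (i + 1))) hi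

lemma disjoint_blocks_Ico (hw : Monotone w) (hi : i ∉ s) :
    Disjoint (blocks w s) (Ico (w i) (w (i + 1))) := by
  refine disjoint_iUnion₂_left.2 fun j hj => hw.pairwise_disjoint_on_Ico_succ ?_
  rintro rfl
  exact hi hj

lemma infinite_blocks (hw : StrictMono w) (hs : s.Infinite) : (blocks w s).Infinite :=
  (hs.image hw.injective.injOn).mono <| image_subset_iff.2 fun i hi =>
    mem_preimage.2 <| Ico_subset_blocks hi (left_mem_Ico.2 (hw i.lt_add_one))

lemma infinite_compl_blocks (hw : StrictMono w) (hs : sᶜ.Infinite) : (blocks w s)ᶜ.Infinite :=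
  (hs.image hw.injective.injOn).mono <| image_subset_iff.2 fun i hi =>
    (disjoint_blocks_Ico hw.monotone hi).notMem_of_mem_right (left_mem_Ico.2 (hw i.lt_add_one))

end blocks

theorem stmt8 (X : Set (Set ℕ)) (hX : ∀ x ∈ X, x.Infinite) (hcard : #X < min dNum rNum) :
    ∃ b : Set ℕ, b.Infinite ∧ bᶜ.Infinite ∧ ∀ x ∈ X,
      {n | enum x n ≤ enum b n}.Infinite ∧ {n | enum x n ≤ enum bᶜ n}.Infinite := by
  obtain ⟨w, hw, hwX⟩ := exists_strictMono_infinite_setOf_lt (enum '' X)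
    (mk_image_le.trans_lt (hcard.trans_le (min_le_left _ _)))
    (by rintro _ ⟨x, hx, rfl⟩; exact Nat.nth_monotone (hX x hx))
  set E : Set ℕ → Set ℕ := fun x => {i | enum x (w i) < w (i + 1)}
  obtain ⟨s, hs, hsc, hreap⟩ := exists_reaps_of_mk_lt_rNum (E '' X)
    (mk_image_le.trans_lt (hcard.trans_le (min_le_right _ _)))
    (by rintro _ ⟨x, hx, rfl⟩; exact hwX _ ⟨x, hx, rfl⟩)
  have hb := infinite_blocks hw hs
  have hbc := infinite_compl_blocks hw hsc
  refine ⟨blocks w s, hb, hbc, fun x hx => ⟨?_, ?_⟩⟩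
  · refine infinite_setOf_le_enum hb hw ((hreap _ ⟨x, hx, rfl⟩).2.mono ?_)
    exact fun i ⟨hi, his⟩ => ⟨hi, disjoint_blocks_Ico hw.monotone his⟩
  · refine infinite_setOf_le_enum hbc hw ((hreap _ ⟨x, hx, rfl⟩).1.mono ?_)
    exact fun i ⟨hi, his⟩ => ⟨hi, disjoint_compl_left.mono_right (Ico_subset_blocks his)⟩
end

section
/- If there exists a bi-𝔡-unbounded set and 𝔡 is a regular cardinal, then 𝔡 ≤ 𝔯. More precisely: if X is a set of infinite co-infinite subsets of ℕ such that both X and {xᶜ : x ∈ X} are 𝔡-unbounded, then every family A ⊆ [ℕ]^∞ of cardinality < 𝔡 is reaped by some r ∈ X. -/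
open Set Cardinal Filter

/-!
If `x` does not split an infinite `a`, then some tail `a \ [0, m)` lies in `x` or in `xᶜ`. The sets
containing a fixed infinite `b` have pointwise smaller enumerations than `b`, so by the
unboundedness of `X` and of its complements, fewer than `𝔡` members `x` of `X` have a given tail
of `a` inside `x`, or inside `xᶜ`. With countably many tails, fewer than `𝔡` sets `a`,
and `𝔡` regular and uncountable, fewer than `𝔡` members of `X` fail to reap `A`, while `|X| ≥ 𝔡`.
-/

lemma enum_le_enum_of_subset {s t : Set ℕ} (hst : s ⊆ t) (hs : s.Infinite) (n : ℕ) :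
    enum t n ≤ enum s n :=
  Nat.nth_le_of_strictMonoOn_of_mapsTo _ (fun k _ => hst (Nat.nth_mem_of_infinite hs k))
    ((Nat.nth_strictMono hs).strictMonoOn _)

lemma exists_forall_eventually_lt (f : ℕ → ℕ → ℕ) :
    ∃ g : ℕ → ℕ, ∀ i, ∀ᶠ n in atTop, f i n < g n := by
  refine ⟨fun n => ∑ j ∈ Finset.range (n + 1), f j n + 1, fun i => ?_⟩
  filter_upwards [eventually_ge_atTop i] with n hin
  have hfi := Finset.single_le_sum (f := fun j => f j n) (fun _ _ => Nat.zero_le _)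
    (Finset.mem_range.2 (by omega : i < n + 1))
  omega

lemma not_isDominating_of_countable {D : Set (ℕ → ℕ)} (hD : D.Countable) : ¬ IsDominating D := by
  intro hdom
  obtain ⟨d₀, hd₀, -⟩ := hdom 0
  obtain ⟨f, rfl⟩ := hD.exists_eq_range ⟨d₀, hd₀⟩
  obtain ⟨g, hg⟩ := exists_forall_eventually_lt f
  obtain ⟨-, ⟨i, rfl⟩, hle⟩ := hdom g
  obtain ⟨n, hlt, hge⟩ := ((hg i).and hle).exists
  exact hlt.not_ge hge

lemma aleph0_lt_dNum : ℵ₀ < dNum := by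
  obtain ⟨D, hD, hdD⟩ : dNum ∈ { c | ∃ D, IsDominating D ∧ c = #D } :=
    csInf_mem ⟨_, univ, fun a => ⟨a, trivial, .of_forall fun _ => le_rfl⟩, rfl⟩
  rw [hdD, ← not_le, le_aleph0_iff_set_countable]
  exact fun hD' => not_isDominating_of_countable hD' hD

lemma le_rNum {κ : Cardinal}
    (h : ∀ A : Set (Set ℕ), (∀ a ∈ A, a.Infinite) → #A < κ → ∃ r : Set ℕ, r.Infinite ∧ Reaps r A) :
    κ ≤ rNum := by
  obtain ⟨A, hA, hunreaped, hrA⟩ : rNum ∈ { c | ∃ A : Set (Set ℕ), (∀ a ∈ A, a.Infinite) ∧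
      (¬ ∃ r : Set ℕ, r.Infinite ∧ Reaps r A) ∧ c = #A } := by
    refine csInf_mem ⟨_, {a | a.Infinite}, fun a ha => ha, ?_, rfl⟩
    rintro ⟨r, hr, hreaps⟩
    simpa using (hreaps r hr).2
  by_contra! hlt
  exact hunreaped (h A hA (hrA ▸ hlt))

section Reaping

variable {κ : Cardinal} {X : Set (Set ℕ)}

lemma exists_diff_Iio_subset_of_not_splits {a x : Set ℕ}
    (h : ¬ ((a ∩ x).Infinite ∧ (a \ x).Infinite)) : ∃ m, a \ Iio m ⊆ x ∨ a \ Iio m ⊆ xᶜ := by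
  rw [not_and_or, not_infinite, not_infinite] at h
  rcases h with hfin | hfin
  · obtain ⟨M, hM⟩ := hfin.bddAbove
    exact ⟨M + 1, Or.inr fun k hk hkx => hk.2 (Nat.lt_succ_of_le (hM ⟨hk.1, hkx⟩))⟩
  · obtain ⟨M, hM⟩ := hfin.bddAbove
    exact ⟨M + 1, Or.inl fun k hk => by_contra fun hkx => hk.2 (Nat.lt_succ_of_le (hM ⟨hk.1, hkx⟩))⟩

lemma mk_setOf_subset_lt (φ : Set ℕ → Set ℕ)
    (hunb : ∀ Y ⊆ X, (∃ b : Set ℕ, b.Infinite ∧ ∀ y ∈ Y, ∀ n, enum (φ y) n ≤ enum b n) → #Y < κ)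
    {b : Set ℕ} (hb : b.Infinite) : #{x ∈ X | b ⊆ φ x} < κ :=
  hunb _ (fun _ hx => hx.1) ⟨b, hb, fun _ hy => enum_le_enum_of_subset hy.2 hb⟩

variable (hreg : κ.IsRegular) (hκ : ℵ₀ < κ)
    (hunb : ∀ Y ⊆ X, (∃ b : Set ℕ, b.Infinite ∧ ∀ y ∈ Y, ∀ n, enum y n ≤ enum b n) → #Y < κ)
    (hunbc : ∀ Y ⊆ X, (∃ b : Set ℕ, b.Infinite ∧ ∀ y ∈ Y, ∀ n, enum yᶜ n ≤ enum b n) → #Y < κ)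
include hreg hκ hunb hunbc

lemma mk_not_splitting_lt {a : Set ℕ} (ha : a.Infinite) :
    #{x ∈ X | ¬ ((a ∩ x).Infinite ∧ (a \ x).Infinite)} < κ := by
  have hcover : {x ∈ X | ¬ ((a ∩ x).Infinite ∧ (a \ x).Infinite)} ⊆
      ⋃ m : ℕ, {x ∈ X | a \ Iio m ⊆ x} ∪ {x ∈ X | a \ Iio m ⊆ xᶜ} := by
    rintro x ⟨hxX, hx⟩
    obtain ⟨m, hm | hm⟩ := exists_diff_Iio_subset_of_not_splits hx
    exacts [mem_iUnion.2 ⟨m, .inl ⟨hxX, hm⟩⟩, mem_iUnion.2 ⟨m, .inr ⟨hxX, hm⟩⟩]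
  refine (mk_le_mk_of_subset hcover).trans_lt ?_
  refine (card_iUnion_lt_iff_forall_of_isRegular hreg (by simpa using hκ)).2 fun m => ?_
  have htail : (a \ Iio m).Infinite := ha.sdiff (finite_Iio m)
  exact (mk_union_le _ _).trans_lt (add_lt_of_lt hreg.aleph0_le
    (mk_setOf_subset_lt id hunb htail) (mk_setOf_subset_lt compl hunbc htail))

theorem exists_mem_reaps (hXcard : κ ≤ #X) {A : Set (Set ℕ)} (hA : ∀ a ∈ A, a.Infinite)
    (hAκ : #A < κ) : ∃ r ∈ X, Reaps r A := by
  have hbad : #(⋃ a ∈ A, {x ∈ X | ¬ ((a ∩ x).Infinite ∧ (a \ x).Infinite)}) < κ :=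
    (card_biUnion_lt_iff_forall_of_isRegular hreg hAκ).2 fun a ha =>
      mk_not_splitting_lt hreg hκ hunb hunbc (hA a ha)
  obtain ⟨r, hrX, hr⟩ := not_subset.1 fun hsub => (hXcard.trans (mk_le_mk_of_subset hsub)).not_gt hbad
  exact ⟨r, hrX, fun a ha => by_contra fun hna => hr (mem_biUnion ha ⟨hrX, hna⟩)⟩

end Reaping

theorem stmt10 (hreg : dNum.IsRegular)
    (X : Set (Set ℕ)) (hX : ∀ x ∈ X, x.Infinite ∧ xᶜ.Infinite) (hXcard : dNum ≤ #X)
    (hunb : ∀ Y ⊆ X, (∃ b : Set ℕ, b.Infinite ∧ ∀ y ∈ Y, ∀ n, enum y n ≤ enum b n) → #Y < dNum)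
    (hunbc : ∀ Y ⊆ X, (∃ b : Set ℕ, b.Infinite ∧ ∀ y ∈ Y, ∀ n, enum yᶜ n ≤ enum b n) → #Y < dNum) :
    dNum ≤ rNum ∧
    ∀ A : Set (Set ℕ), (∀ a ∈ A, a.Infinite) → #A < dNum → ∃ r ∈ X, Reaps r A := by
  have hreaps : ∀ A : Set (Set ℕ), (∀ a ∈ A, a.Infinite) → #A < dNum → ∃ r ∈ X, Reaps r A :=
    fun _ => exists_mem_reaps hreg aleph0_lt_dNum hunb hunbc hXcard
  refine ⟨le_rNum fun A hA hAd => ?_, hreaps⟩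
  obtain ⟨r, hrX, hr⟩ := hreaps A hA hAd
  exact ⟨r, (hX r hrX).1, hr⟩
end

section
/- (Productive Two Worlds Lemma) Let X ⊆ [ℕ]^∞, Y a topological space, and Ψ : (X ∪ Fin) × Y → [ℕ]^∞ an upper continuous function, where X ∪ Fin carries the subspace topology of the Cantor space 𝒫(ℕ). Then there is an upper continuous function Φ : Y → [ℕ]^∞ such that for all x ∈ X, y ∈ Y, and n ∈ ℕ: if Φ(y)(n) ≤ x(n), then Ψ(x,y)(n) ≤ Φ(y)(n). -/
open Set Cardinal Filter

/-- The subset of ℕ coded by a point of the Cantor space. -/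
def toSet (f : ℕ → Bool) : Set ℕ := {n | f n = true}

open Topology

/-!
For fixed `y` and `n`, the points of Cantor space with at most `n` ones form a compact set
`Kₙ ⊆ Fin`, so upper continuity and the tube lemma bound `Ψ(z, y')(n)` by some `M` for `z` in a
neighbourhood of `Kₙ` and `y'` near `y`. By compactness again, such a neighbourhood contains every
`z` with at most `n` ones below some `m`, and an `x ∈ X` with `m ≤ x(n)` is such a `z`. Taking the
least admissible `m` (which is upper continuous in `y`) and making it strictly increasing in `n`
gives `Φ`.
-/

def UpperContinuous {Z : Type*} [TopologicalSpace Z] (Φ : Z → ℕ → ℕ) : Prop :=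
  ∀ n m : ℕ, IsOpen {z | Φ z n ≤ m}

lemma continuous_count_eq_true (m : ℕ) :
    Continuous fun z : ℕ → Bool => Nat.count (z · = true) m := by
  induction m with
  | zero => simpa using continuous_const
  | succ m ih =>
    simp only [Nat.count_succ]
    exact ih.add ((continuous_of_discreteTopology
      (f := fun b : Bool => if b = true then 1 else 0)).comp (continuous_apply m))

lemma isClosed_setOf_count_eq_true_le (n m : ℕ) :
    IsClosed {z : ℕ → Bool | Nat.count (z · = true) m ≤ n} :=
  (isClosed_discrete (Iic n)).preimage (continuous_count_eq_true m)

lemma finite_toSet_of_forall_count_le {z : ℕ → Bool} {n : ℕ}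
    (h : ∀ m, Nat.count (z · = true) m ≤ n) : (toSet z).Finite := by
  by_contra hinf
  have := h (Nat.nth (z · = true) (n + 1))
  rw [Nat.count_nth_of_infinite hinf] at this
  omega

lemma exists_setOf_count_eq_true_le_subset {n : ℕ} {U : Set (ℕ → Bool)} (hU : IsOpen U)
    (hKU : {z : ℕ → Bool | ∀ m, Nat.count (z · = true) m ≤ n} ⊆ U) :
    ∃ m, {z : ℕ → Bool | Nat.count (z · = true) m ≤ n} ⊆ U :=
  exists_subset_nhds_of_isCompact'
    (V := fun m => {z : ℕ → Bool | Nat.count (z · = true) m ≤ n})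
    (Antitone.directed_ge fun _ _ h _ hz => (Nat.count_monotone _ h).trans hz)
    (fun m => (isClosed_setOf_count_eq_true_le n m).isCompact)
    (isClosed_setOf_count_eq_true_le n)
    fun z hz => hU.mem_nhds (hKU (by simpa using hz))

section


variable {Y : Type*} [TopologicalSpace Y]

lemma exists_upperContinuous_mem_of_isOpen_of_monotone (Q : ℕ → ℕ → Set Y)
    (hQ : ∀ n m, IsOpen (Q n m)) (hmono : ∀ n, Monotone (Q n))
    (hcover : ∀ y n, ∃ m, y ∈ Q n m) :
    ∃ g : Y → ℕ → ℕ, UpperContinuous g ∧ ∀ y n, y ∈ Q n (g y n) := by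
  classical
  refine ⟨fun y n => Nat.find (hcover y n), fun n m => ?_, fun y n => Nat.find_spec (hcover y n)⟩
  have : {y | Nat.find (hcover y n) ≤ m} = Q n m := by
    ext y
    simp only [mem_ofPred_eq, Nat.find_le_iff]
    exact ⟨fun ⟨k, hk, hy⟩ => hmono n hk hy, fun hy => ⟨m, le_rfl, hy⟩⟩
  exact this ▸ hQ n m

lemma UpperContinuous.exists_strictMono_ge {g : Y → ℕ → ℕ} (hg : UpperContinuous g) :
    ∃ Φ : Y → ℕ → ℕ, (∀ y, StrictMono (Φ y)) ∧ UpperContinuous Φ ∧ ∀ y n, g y n ≤ Φ y n := by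
  refine ⟨fun y n => n + (Finset.range (n + 1)).sup (g y), fun y => ?_, fun n m => ?_,
    fun y n => ?_⟩
  · refine strictMono_nat_of_lt_succ fun n => ?_
    have := Finset.sup_mono (f := g y)
      (Finset.range_subset_range.mpr (Nat.le_add_right (n + 1) 1))
    dsimp only
    omega
  · by_cases hnm : n ≤ m
    · have : {y | n + (Finset.range (n + 1)).sup (g y) ≤ m} =
          ⋂ k ∈ Finset.range (n + 1), {y | g y k ≤ m - n} := by
        ext y
        simp only [mem_ofPred_eq, mem_iInter, ← le_tsub_iff_left hnm, Finset.sup_le_iff]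
      rw [this]
      exact isOpen_biInter_finset fun k _ => hg k (m - n)
    · have : {y | n + (Finset.range (n + 1)).sup (g y) ≤ m} = ∅ :=
        eq_empty_of_forall_notMem fun y (hy : _ ≤ m) => hnm (by omega)
      exact this ▸ isOpen_empty
  · exact (Finset.le_sup (Finset.self_mem_range_succ n)).trans (Nat.le_add_left _ _)

lemma UpperContinuous.exists_isOpen_prod_bound {Z : Type*} [TopologicalSpace Z]
    {Ψ : Z × Y → ℕ → ℕ} (hΨ : UpperContinuous Ψ) (n : ℕ) {K : Set Z} (hK : IsCompact K)
    (y : Y) :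
    ∃ (M : ℕ) (U : Set Z) (V : Set Y), IsOpen U ∧ IsOpen V ∧ K ⊆ U ∧ y ∈ V ∧
      ∀ z ∈ U, ∀ y' ∈ V, Ψ (z, y') n ≤ M := by
  obtain ⟨M, hM⟩ := (hK.prod isCompact_singleton).elim_directed_cover
    (fun M => {w | Ψ w n ≤ M}) (hΨ n) (fun w _ => mem_iUnion.2 ⟨Ψ w n, le_refl (Ψ w n)⟩)
    (Monotone.directed_le fun _ _ h _ hw => le_trans hw h)
  obtain ⟨U, V, hU, hV, hKU, hyV, hUV⟩ := generalized_tube_lemma hK isCompact_singleton (hΨ n M) hM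
  exact ⟨M, U, V, hU, hV, hKU, hyV rfl, fun z hz y' hy' => hUV (mk_mem_prod hz hy')⟩

lemma exists_mem_interior_forall_count_le {S : Set (ℕ → Bool)}
    (hS : {f | (toSet f).Finite} ⊆ S) {Ψ : S × Y → ℕ → ℕ} (hΨ : UpperContinuous Ψ) (y : Y) (n : ℕ) :
    ∃ m, y ∈ interior {y' | ∀ z : S, Nat.count (z.1 · = true) m ≤ n → Ψ (z, y') n ≤ m} := by
  set K := {z : ℕ → Bool | ∀ m, Nat.count (z · = true) m ≤ n}
  have hKS : K ⊆ S := fun z hz => hS (finite_toSet_of_forall_count_le hz)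
  have hK : IsCompact K := by
    simpa only [K, ofPred_forall] using
      (isClosed_iInter (isClosed_setOf_count_eq_true_le n)).isCompact
  obtain ⟨M, U, V, hU, hV, hKU, hyV, hbound⟩ := hΨ.exists_isOpen_prod_bound n
    (IsInducing.subtypeVal.isCompact_preimage' hK (by simpa using hKS)) y
  obtain ⟨U', hU', rfl⟩ := isOpen_induced_iff.mp hU
  obtain ⟨m, hm⟩ := exists_setOf_count_eq_true_le_subset hU'
    fun z hz => hKU (a := ⟨z, hKS hz⟩) hz
  refine ⟨max m M, mem_interior.2 ⟨V, fun y' hy' z hz => ?_, hV, hyV⟩⟩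
  exact (hbound z (hm ((Nat.count_monotone _ (le_max_left m M)).trans hz)) y' hy').trans
    (le_max_right m M)

end


theorem stmt14_general (X : Set (ℕ → Bool))
    (Y : Type*) [TopologicalSpace Y]
    (Ψ : ↥(X ∪ {f | (toSet f).Finite}) × Y → ℕ → ℕ)
    (hΨuc : ∀ n m : ℕ, IsOpen {z | Ψ z n ≤ m}) :
    ∃ Φ : Y → ℕ → ℕ, (∀ y, StrictMono (Φ y)) ∧ (∀ n m : ℕ, IsOpen {y | Φ y n ≤ m}) ∧
      ∀ (x : ℕ → Bool) (hx : x ∈ X) (y : Y) (n : ℕ),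
        Φ y n ≤ enum (toSet x) n →
        Ψ (⟨x, Set.mem_union_left _ hx⟩, y) n ≤ Φ y n := by
  let Q : ℕ → ℕ → Set Y := fun n m => interior
    {y | ∀ z : ↥(X ∪ {f | (toSet f).Finite}), Nat.count (z.1 · = true) m ≤ n → Ψ (z, y) n ≤ m}
  have hQmono : ∀ n, Monotone (Q n) := fun n m m' h => interior_mono fun y hy z hz =>
    (hy z ((Nat.count_monotone _ h).trans hz)).trans h
  obtain ⟨g, hg, hgQ⟩ := exists_upperContinuous_mem_of_isOpen_of_monotone Q
    (fun _ _ => isOpen_interior) hQmono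
    (exists_mem_interior_forall_count_le subset_union_right hΨuc)
  obtain ⟨Φ, hΦmono, hΦ, hgΦ⟩ := hg.exists_strictMono_ge
  refine ⟨Φ, hΦmono, hΦ, fun x hx y n hle => ?_⟩
  exact interior_subset (hQmono n (hgΦ y n) (hgQ y n)) _ (Nat.le_nth_of_count_le hle)

theorem stmt14 (X : Set (ℕ → Bool)) (hX : ∀ f ∈ X, (toSet f).Infinite)
    (Y : Type*) [TopologicalSpace Y]
    (Ψ : ↥(X ∪ {f | (toSet f).Finite}) × Y → ℕ → ℕ)
    (hΨmono : ∀ z, StrictMono (Ψ z))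
    (hΨuc : ∀ n m : ℕ, IsOpen {z | Ψ z n ≤ m}) :
    ∃ Φ : Y → ℕ → ℕ, (∀ y, StrictMono (Φ y)) ∧ (∀ n m : ℕ, IsOpen {y | Φ y n ≤ m}) ∧
      ∀ (x : ℕ → Bool) (hx : x ∈ X) (y : Y) (n : ℕ),
        Φ y n ≤ enum (toSet x) n →
        Ψ (⟨x, Set.mem_union_left _ hx⟩, y) n ≤ Φ y n :=
  stmt14_general X Y Ψ hΨuc
end

section
/- Let S be a superfilter (a semifilter such that a ∪ b ∈ S implies a ∈ S or b ∈ S). A set X ⊆ [ℕ]^∞ is a cofinal S-scale if and only if it is an S-scale. -/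
/- A cofinal scale is a scale with `c = b`, since `≤_{S⁺}` is reflexive. Conversely, for a
superfilter `S`, `b ≤_{S⁺} c ≤_S x` gives `b ≤_S x`: the set `[c ≤ x] ∈ S` is covered by
`[b ≤ c] ∩ [c ≤ x]` and `[b ≤ c]ᶜ`, and the latter is not in `S`. Hence the exceptional set of `b`
is contained in that of `c`. -/

open Set Cardinal Filter

/-- A semifilter: a nonempty family of infinite subsets of ℕ closed under almost-supersets. -/
def IsSemifilter (S : Set (Set ℕ)) : Prop :=
  S.Nonempty ∧ (∀ s ∈ S, s.Infinite) ∧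
    ∀ s ∈ S, ∀ b : Set ℕ, b.Infinite → (s \ b).Finite → b ∈ S

/-- \`a ≤_S b\`: the set \`[a ≤ b]\` of agreement of the enumerations belongs to \`S\`. -/
def leS (S : Set (Set ℕ)) (a b : Set ℕ) : Prop := {n | enum a n ≤ enum b n} ∈ S

/-- \`S⁺\`, the dual semifilter. -/
def splus (S : Set (Set ℕ)) : Set (Set ℕ) := {a | a.Infinite ∧ aᶜ ∉ S}

/-- \`𝔟(S)\`: the least cardinality of a \`≤_S\`-unbounded family in \`[ℕ]^∞\`. -/
noncomputable def bofS (S : Set (Set ℕ)) : Cardinal :=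
  sInf { c | ∃ X : Set (Set ℕ), (∀ x ∈ X, x.Infinite) ∧
    (¬ ∃ b : Set ℕ, b.Infinite ∧ ∀ x ∈ X, leS S x b) ∧ c = #X }

/-- An \`S\`-scale. -/
def IsScale (S X : Set (Set ℕ)) : Prop :=
  (∀ x ∈ X, x.Infinite) ∧ bofS S ≤ #X ∧
  ∀ b : Set ℕ, b.Infinite → ∃ c : Set ℕ, c.Infinite ∧ leS (splus S) b c ∧
    #{x ∈ X | ¬ leS S c x} < bofS S

/-- A cofinal \`S\`-scale. -/
def IsCofinalScale (S X : Set (Set ℕ)) : Prop :=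
  (∀ x ∈ X, x.Infinite) ∧ bofS S ≤ #X ∧
  ∀ b : Set ℕ, b.Infinite → #{x ∈ X | ¬ leS S b x} < bofS S

/-- A filter: a semifilter closed under finite intersections. -/
def IsSetFilter (F : Set (Set ℕ)) : Prop :=
  IsSemifilter F ∧ ∀ a ∈ F, ∀ b ∈ F, a ∩ b ∈ F

namespace IsSemifilter

variable {S : Set (Set ℕ)}

lemma mem_of_superset (hS : IsSemifilter S) {s t : Set ℕ} (hs : s ∈ S) (hst : s ⊆ t) :
    t ∈ S :=
  hS.2.2 s hs t ((hS.2.1 s hs).mono hst) (by simp [sdiff_eq_empty.mpr hst])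

lemma leS_splus_refl (hS : IsSemifilter S) (b : Set ℕ) : leS (splus S) b b := by
  simp only [leS, le_refl, ofPred_true]
  exact ⟨infinite_univ, fun h => hS.2.1 _ h (by simp)⟩

lemma inter_mem_of_mem_splus (hS : IsSemifilter S)
    (hsup : ∀ a b : Set ℕ, a ∪ b ∈ S → a ∈ S ∨ b ∈ S) {a s : Set ℕ} (ha : a ∈ splus S)
    (hs : s ∈ S) : a ∩ s ∈ S := by
  have hcover : s ⊆ (a ∩ s) ∪ aᶜ := fun n hn => (em (n ∈ a)).imp (fun h => ⟨h, hn⟩) id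
  exact (hsup _ _ (hS.mem_of_superset hs hcover)).resolve_right ha.2

lemma leS_trans_of_leS_splus (hS : IsSemifilter S)
    (hsup : ∀ a b : Set ℕ, a ∪ b ∈ S → a ∈ S ∨ b ∈ S) {b c x : Set ℕ}
    (hbc : leS (splus S) b c) (hcx : leS S c x) : leS S b x :=
  hS.mem_of_superset (hS.inter_mem_of_mem_splus hsup hbc hcx) fun _ hn =>
    mem_ofPred.mpr (hn.1.trans hn.2)

lemma isScale_of_isCofinalScale (hS : IsSemifilter S) {X : Set (Set ℕ)}
    (hX : IsCofinalScale S X) : IsScale S X :=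
  ⟨hX.1, hX.2.1, fun b hb => ⟨b, hb, hS.leS_splus_refl b, hX.2.2 b hb⟩⟩

lemma isCofinalScale_of_isScale (hS : IsSemifilter S)
    (hsup : ∀ a b : Set ℕ, a ∪ b ∈ S → a ∈ S ∨ b ∈ S) {X : Set (Set ℕ)}
    (hX : IsScale S X) : IsCofinalScale S X := by
  refine ⟨hX.1, hX.2.1, fun b hb => ?_⟩
  obtain ⟨c, -, hbc, hc⟩ := hX.2.2 b hb
  have hsub : {x ∈ X | ¬ leS S b x} ⊆ {x ∈ X | ¬ leS S c x} := fun x ⟨hx, hbx⟩ =>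
    ⟨hx, fun hcx => hbx (hS.leS_trans_of_leS_splus hsup hbc hcx)⟩
  exact (mk_le_mk_of_subset hsub).trans_lt hc

end IsSemifilter

theorem stmt17 (S : Set (Set ℕ)) (hS : IsSemifilter S)
    (hsup : ∀ a b : Set ℕ, a ∪ b ∈ S → a ∈ S ∨ b ∈ S) (X : Set (Set ℕ)) :
    IsCofinalScale S X ↔ IsScale S X :=
  ⟨hS.isScale_of_isCofinalScale, hS.isCofinalScale_of_isScale hsup⟩
end
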